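/- Let Σ₁ = E[var(X | Z)] be the expected conditional covariance (positive semidefinite p×p), β_1,...,β_k, b_1,...,b_k ∈ ℝ^p, π_t > 0 with ∑π_t = 1, and 𝔅, B the matrices with these columns. Then diag(π_t^{-1}(β_t − b_t)^T Σ₁ (β_t − b_t)) − (𝔅 − B)^T Σ₁ (𝔅 − B) is positive semidefinite. -/

import Mathlib

/-!
Write `G = (𝔅 - B)ᵀ Σ₁ (𝔅 - B)`, a positive semidefinite Gram matrix, so `G = Aᵀ A` for some `A`.
The claim is `diag (G_tt / π_t) - G ⪰ 0`, i.e. `(∑ₜ A_it x_t)² ≤ ∑ₜ (A_it x_t)² / π_t` for every row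
`i` of `A`, which is the weighted Cauchy–Schwarz inequality with weights `π_t`, `∑ π_t ≤ 1`.
-/

open Matrix BigOperators

variable {m ι : Type*} [Fintype m] [Fintype ι]

theorem sq_sum_le_sum_sq_div_of_sum_le_one {π : ι → ℝ} (hπ : ∀ t, 0 < π t)
    (hsum : ∑ t, π t ≤ 1) (a : ι → ℝ) : (∑ t, a t) ^ 2 ≤ ∑ t, a t ^ 2 / π t :=
  have hterm (t : ι) : 0 ≤ a t ^ 2 / π t := div_nonneg (sq_nonneg _) (hπ t).le
  calc (∑ t, a t) ^ 2 ≤ (∑ t, π t) * ∑ t, a t ^ 2 / π t :=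
        Finset.sum_sq_le_sum_mul_sum_of_sq_le_mul _ (fun t _ => (hπ t).le) (fun t _ => hterm t)
          (fun t _ => (mul_div_cancel₀ _ (hπ t).ne').ge)
    _ ≤ ∑ t, a t ^ 2 / π t := mul_le_of_le_one_left (Finset.sum_nonneg fun t _ => hterm t) hsum

namespace Matrix

theorem dotProduct_transpose_mul_self_mulVec (A : Matrix m ι ℝ) (x : ι → ℝ) :
    x ⬝ᵥ (Aᵀ * A) *ᵥ x = ∑ i, (∑ t, A i t * x t) ^ 2 := by
  rw [← mulVec_mulVec, dotProduct_mulVec, vecMul_transpose]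
  simp [dotProduct, mulVec, sq]

variable [DecidableEq ι]

theorem dotProduct_diagonal_div_mulVec (A : Matrix m ι ℝ) (π : ι → ℝ) (x : ι → ℝ) :
    x ⬝ᵥ diagonal (fun t => (Aᵀ * A) t t / π t) *ᵥ x = ∑ i, ∑ t, (A i t * x t) ^ 2 / π t := by
  simp only [dotProduct, mulVec_diagonal, mul_apply, transpose_apply, Finset.sum_div,
    Finset.mul_sum, Finset.sum_mul]
  rw [Finset.sum_comm]
  exact Finset.sum_congr rfl fun t _ => Finset.sum_congr rfl fun i _ => by ring

theorem posSemidef_diagonal_div_sub_transpose_mul_self (A : Matrix m ι ℝ) {π : ι → ℝ}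
    (hπ : ∀ t, 0 < π t) (hsum : ∑ t, π t ≤ 1) :
    (diagonal (fun t => (Aᵀ * A) t t / π t) - Aᵀ * A).PosSemidef := by
  have hA : (Aᵀ * A).IsHermitian := by simpa using (posSemidef_conjTranspose_mul_self A).1
  refine .of_dotProduct_mulVec_nonneg ((isHermitian_diagonal_of_self_adjoint _ ?_).sub hA)
    fun x => ?_
  · ext t
    simp
  rw [star_trivial, sub_mulVec, dotProduct_sub, dotProduct_diagonal_div_mulVec,
    dotProduct_transpose_mul_self_mulVec, sub_nonneg]
  exact Finset.sum_le_sum fun i _ => sq_sum_le_sum_sq_div_of_sum_le_one hπ hsum _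

open scoped MatrixOrder in
theorem PosSemidef.posSemidef_diagonal_div_sub {G : Matrix ι ι ℝ} (hG : G.PosSemidef)
    {π : ι → ℝ} (hπ : ∀ t, 0 < π t) (hsum : ∑ t, π t ≤ 1) :
    (diagonal (fun t => G t t / π t) - G).PosSemidef := by
  obtain ⟨A, rfl⟩ := CStarAlgebra.nonneg_iff_eq_star_mul_self.mp hG.nonneg
  simpa [star_eq_conjTranspose] using posSemidef_diagonal_div_sub_transpose_mul_self A hπ hsum

end Matrix

/-- Theorem 3(ii) final step: the key matrix inequality with Σ₁ = E[var(X|Z)]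
(any positive semidefinite matrix). -/
theorem stmt16 (p k : ℕ) (S1 : Matrix (Fin p) (Fin p) ℝ) (hS1 : S1.PosSemidef)
    (β b : Fin k → Fin p → ℝ) (π : Fin k → ℝ) (hπ : ∀ t, 0 < π t) (hsum : ∑ t, π t = 1)
    (Bβ Bb : Matrix (Fin p) (Fin k) ℝ)
    (hBβ : ∀ i t, Bβ i t = β t i) (hBb : ∀ i t, Bb i t = b t i) :
    (Matrix.diagonal (fun t => (π t)⁻¹ * ((β t - b t) ⬝ᵥ S1.mulVec (β t - b t))) -
      (Bβ - Bb)ᵀ * S1 * (Bβ - Bb)).PosSemidef := by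
  have hcol (t : Fin k) : (Bβ - Bb)ᵀ t = β t - b t := by
    ext i
    simp [hBβ, hBb]
  have hdiag (t : Fin k) :
      ((Bβ - Bb)ᵀ * S1 * (Bβ - Bb)) t t = (β t - b t) ⬝ᵥ S1 *ᵥ (β t - b t) := by
    rw [← hcol, Matrix.mul_assoc, mul_apply]
    simp [dotProduct, mulVec, mul_apply]
  have hG : ((Bβ - Bb)ᵀ * S1 * (Bβ - Bb)).PosSemidef := by
    simpa using hS1.conjTranspose_mul_mul_same (Bβ - Bb)
  convert hG.posSemidef_diagonal_div_sub hπ hsum.le using 3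
  funext t
  rw [hdiag, inv_mul_eq_div]
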